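/- arXiv:2402.04496 — 3 statements merged into one kernel-verified Lean document; each statement's English description precedes it below -/
import Mathlib

section
/- Let E be a Banach space. If (x_j)_{j=1}^∞ is a weakly 1-summable sequence in E and (α_j)_{j=1}^∞ ∈ c_0 (a null scalar sequence), then the series ∑_{j=1}^∞ α_j x_j converges in E and ‖∑_{j=1}^∞ α_j x_j‖ ≤ sup_j |α_j| · ‖(x_j)‖_{w,1}. -/
open Filter Topology
open scoped ENNReal NNReal

/-- The weak `ℓ_p` "norm" of a Banach-space valued sequence, valued in `ℝ≥0∞`:
`sup_{‖φ‖ ≤ 1} (∑_j |φ(x_j)|^p)^{1/p}`. -/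
noncomputable def weakLpNorm (𝕜 : Type*) [RCLike 𝕜] {X : Type*} [NormedAddCommGroup X]
    [NormedSpace 𝕜 X] (p : ℝ) (x : ℕ → X) : ℝ≥0∞ :=
  ⨆ φ ∈ {φ : X →L[𝕜] 𝕜 | ‖φ‖ ≤ 1}, (∑' j, (‖φ (x j)‖₊ : ℝ≥0∞) ^ p) ^ (1 / p)

/-- A sequence is weakly `p`-summable if `(φ(x_j))_j ∈ ℓ_p` for every continuous functional. -/
def WeaklyLpSummable (𝕜 : Type*) [RCLike 𝕜] {X : Type*} [NormedAddCommGroup X]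
    [NormedSpace 𝕜 X] (p : ℝ) (x : ℕ → X) : Prop :=
  ∀ φ : X →L[𝕜] 𝕜, Summable fun j => ‖φ (x j)‖ ^ p

/-! Testing against functionals gives
`‖∑_{j ∈ t} α_j x_j‖ ≤ max_{j ∈ t} |α_j| · sup_{‖φ‖ ≤ 1} ∑_{j ∈ t} |φ(x_j)|`.
The last supremum is bounded uniformly in `t`: the seminorms `φ ↦ ∑_{j ∈ t} |φ(x_j)|` on the
Banach space `E*` are pointwise bounded, so the uniform boundedness principle (in its barrelled
form) bounds them by a multiple of `‖φ‖`. Hence the partial sums are Cauchy when `α_j → 0`, and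
a norming functional for the sum `S` gives `‖S‖ ≤ sup_j |α_j| · ‖(x_j)‖_{w,1}`. -/

section

variable {𝕜 : Type*} [RCLike 𝕜] {E : Type*} [NormedAddCommGroup E] [NormedSpace 𝕜 E]

theorem weaklyLpSummable_one_iff {x : ℕ → E} :
    WeaklyLpSummable 𝕜 1 x ↔ ∀ φ : StrongDual 𝕜 E, Summable fun j => ‖φ (x j)‖ := by
  simp [WeaklyLpSummable]

theorem exists_sum_norm_apply_le_mul_norm {x : ℕ → E}
    (hx : ∀ φ : StrongDual 𝕜 E, Summable fun j => ‖φ (x j)‖) :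
    ∃ C, 0 < C ∧ ∀ (φ : StrongDual 𝕜 E) (F : Finset ℕ), ∑ j ∈ F, ‖φ (x j)‖ ≤ C * ‖φ‖ := by
  set p : Finset ℕ → Seminorm 𝕜 (StrongDual 𝕜 E) := fun F =>
    ∑ j ∈ F, (normSeminorm 𝕜 𝕜).comp (ContinuousLinearMap.apply 𝕜 𝕜 (x j)).toLinearMap
  have hp : ∀ F, ⇑(p F) = fun φ => ∑ j ∈ F, ‖φ (x j)‖ := fun F => by ext; simp [p]
  have hbdd : BddAbove (Set.range p) := Seminorm.bddAbove_range_iff.2 fun φ =>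
    ⟨∑' j, ‖φ (x j)‖, by
      rintro _ ⟨F, rfl⟩
      simpa [hp] using (hx φ).sum_le_tsum F fun j _ => norm_nonneg _⟩
  have hsup : ⇑(⨆ F, p F) = ⨆ F, ⇑(p F) := Seminorm.coe_iSup_eq hbdd
  have hcont : Continuous ⇑(⨆ F, p F) :=
    hsup ▸ Seminorm.continuous_iSup p (fun F => by rw [hp]; fun_prop) hbdd
  obtain ⟨C, hC0, hC⟩ := (⨆ F, p F).bound_of_continuous_normedSpace hcont
  refine ⟨C, hC0, fun φ F => ?_⟩
  calc ∑ j ∈ F, ‖φ (x j)‖ = p F φ := by rw [hp]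
    _ ≤ (⨆ F, p F) φ := by
        rw [hsup, iSup_apply]
        exact le_ciSup (Seminorm.bddAbove_range_iff.1 hbdd φ) F
    _ ≤ C * ‖φ‖ := hC φ

theorem norm_sum_smul_le {x : ℕ → E} {C : ℝ} (hC0 : 0 ≤ C)
    (hC : ∀ (φ : StrongDual 𝕜 E) (F : Finset ℕ), ∑ j ∈ F, ‖φ (x j)‖ ≤ C * ‖φ‖)
    {α : ℕ → 𝕜} {δ : ℝ} (hδ : 0 ≤ δ) {t : Finset ℕ} (hα : ∀ j ∈ t, ‖α j‖ ≤ δ) :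
    ‖∑ j ∈ t, α j • x j‖ ≤ δ * C := by
  obtain ⟨φ, hφ1, hφ⟩ := exists_dual_vector'' 𝕜 (∑ j ∈ t, α j • x j)
  calc ‖∑ j ∈ t, α j • x j‖ = ‖φ (∑ j ∈ t, α j • x j)‖ := by
        rw [hφ, RCLike.norm_ofReal, abs_norm]
    _ = ‖∑ j ∈ t, α j * φ (x j)‖ := by simp
    _ ≤ ∑ j ∈ t, ‖α j‖ * ‖φ (x j)‖ := (norm_sum_le _ _).trans_eq (by simp)
    _ ≤ ∑ j ∈ t, δ * ‖φ (x j)‖ := Finset.sum_le_sum fun j hj => by gcongr; exact hα j hj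
    _ = δ * ∑ j ∈ t, ‖φ (x j)‖ := (Finset.mul_sum _ _ _).symm
    _ ≤ δ * (C * 1) := by gcongr; exact (hC φ t).trans (by gcongr)
    _ = δ * C := by rw [mul_one]

theorem summable_smul_of_tendsto_zero [CompleteSpace E] {x : ℕ → E} {C : ℝ} (hC0 : 0 ≤ C)
    (hC : ∀ (φ : StrongDual 𝕜 E) (F : Finset ℕ), ∑ j ∈ F, ‖φ (x j)‖ ≤ C * ‖φ‖)
    {α : ℕ → 𝕜} (hα : Tendsto α atTop (𝓝 0)) : Summable fun j => α j • x j := by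
  refine summable_iff_vanishing_norm.2 fun ε hε => ?_
  obtain ⟨m, hm⟩ := Metric.tendsto_atTop.1 hα (ε / (C + 1)) (by positivity)
  refine ⟨Finset.range m, fun t ht => ?_⟩
  have hαt : ∀ j ∈ t, ‖α j‖ ≤ ε / (C + 1) := fun j hj => by
    have hmj : m ≤ j := by simpa using Finset.disjoint_left.1 ht hj
    simpa using (hm j hmj).le
  calc ‖∑ j ∈ t, α j • x j‖ ≤ ε / (C + 1) * C := norm_sum_smul_le hC0 hC (by positivity) hαt
    _ < ε := by
      rw [div_mul_eq_mul_div, div_lt_iff₀ (by positivity)]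
      nlinarith

theorem le_weakLpNorm {p : ℝ} (x : ℕ → E) {φ : StrongDual 𝕜 E} (hφ : ‖φ‖ ≤ 1) :
    (∑' j, (‖φ (x j)‖₊ : ℝ≥0∞) ^ p) ^ (1 / p) ≤ weakLpNorm 𝕜 p x :=
  le_iSup₂ (f := fun ψ (_ : ψ ∈ {ψ : E →L[𝕜] 𝕜 | ‖ψ‖ ≤ 1}) =>
    (∑' j, (‖ψ (x j)‖₊ : ℝ≥0∞) ^ p) ^ (1 / p)) φ hφ

theorem nnnorm_le_iSup_mul_weakLpNorm_one {x : ℕ → E} {α : ℕ → 𝕜} {S : E}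
    (hS : HasSum (fun j => α j • x j) S) :
    (‖S‖₊ : ℝ≥0∞) ≤ (⨆ j, (‖α j‖₊ : ℝ≥0∞)) * weakLpNorm 𝕜 1 x := by
  obtain ⟨φ, hφ1, hφS⟩ := exists_dual_vector'' 𝕜 S
  have hφx : ∑' j, (‖φ (x j)‖₊ : ℝ≥0∞) ≤ weakLpNorm 𝕜 1 x := by
    simpa using le_weakLpNorm (p := 1) x hφ1
  calc (‖S‖₊ : ℝ≥0∞) = ‖φ S‖ₑ := by simp [hφS, enorm_eq_nnnorm]
    _ = ‖∑' j, α j * φ (x j)‖ₑ := by simp [← (φ.hasSum hS).tsum_eq]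
    _ ≤ ∑' j, (‖α j‖₊ : ℝ≥0∞) * ‖φ (x j)‖₊ :=
        enorm_tsum_le_tsum_enorm.trans_eq (by simp [enorm_eq_nnnorm])
    _ ≤ ∑' j, (⨆ k, (‖α k‖₊ : ℝ≥0∞)) * ‖φ (x j)‖₊ :=
        ENNReal.tsum_le_tsum fun j => by gcongr; exact le_iSup (fun k => (‖α k‖₊ : ℝ≥0∞)) j
    _ = (⨆ k, (‖α k‖₊ : ℝ≥0∞)) * ∑' j, (‖φ (x j)‖₊ : ℝ≥0∞) := ENNReal.tsum_mul_left
    _ ≤ (⨆ j, (‖α j‖₊ : ℝ≥0∞)) * weakLpNorm 𝕜 1 x := by gcongr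

end

/-- If `(x_j)` is weakly `1`-summable in a Banach space `E` and
`(α_j) ∈ c₀`, then `∑_j α_j x_j` converges and
`‖∑_j α_j x_j‖ ≤ sup_j |α_j| ⬝ ‖(x_j)‖_{w,1}`. -/
theorem stmt_2 {𝕜 : Type*} [RCLike 𝕜] {E : Type*} [NormedAddCommGroup E] [NormedSpace 𝕜 E]
    [CompleteSpace E] (x : ℕ → E) (hx : WeaklyLpSummable 𝕜 1 x)
    (α : ℕ → 𝕜) (hα : Tendsto α atTop (𝓝 0)) :
    ∃ S : E, Tendsto (fun n => ∑ j ∈ Finset.range n, α j • x j) atTop (𝓝 S) ∧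
      (‖S‖₊ : ℝ≥0∞) ≤ (⨆ j, (‖α j‖₊ : ℝ≥0∞)) * weakLpNorm 𝕜 1 x := by
  obtain ⟨C, hC0, hC⟩ := exists_sum_norm_apply_le_mul_norm (weaklyLpSummable_one_iff.1 hx)
  have hsum : Summable fun j => α j • x j := summable_smul_of_tendsto_zero hC0.le hC hα
  exact ⟨_, hsum.hasSum.tendsto_sum_nat, nnnorm_le_iSup_mul_weakLpNorm_one hsum.hasSum⟩
end

section
/- Let E be a Banach space. A bounded linear operator u : c_0 → E is compact if and only if the sequence (u(e_j))_{j=1}^∞ is unconditionally 1-summable in E. -/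
open Filter Topology
open scoped ENNReal NNReal

/-- A sequence is unconditionally `p`-summable if it is weakly `p`-summable and the weak
`p`-norms of its tails tend to zero. -/
def UncondLpSummable (𝕜 : Type*) [RCLike 𝕜] {X : Type*} [NormedAddCommGroup X]
    [NormedSpace 𝕜 X] (p : ℝ) (x : ℕ → X) : Prop :=
  WeaklyLpSummable 𝕜 p x ∧
    Tendsto (fun n : ℕ => weakLpNorm 𝕜 p fun j => x (n + j)) atTop (𝓝 (0 : ℝ≥0∞))

/-- The `j`-th canonical unit vector of `c₀`. -/
noncomputable def c0single (𝕜 : Type*) [RCLike 𝕜] (j : ℕ) : ZeroAtInftyContinuousMap ℕ 𝕜 where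
  toFun := fun i => if i = j then 1 else 0
  continuous_toFun := continuous_of_discreteTopology
  zero_at_infty' := by
    have h : (fun i : ℕ => if i = j then (1 : 𝕜) else 0) =ᶠ[Filter.cocompact ℕ]
        (fun _ => (0 : 𝕜)) := by
      rw [cocompact_eq_atTop]
      filter_upwards [eventually_gt_atTop j] with i hi
      simp [hi.ne']
    exact Tendsto.congr' h.symm tendsto_const_nhds


/-!
The dual of `c₀` is `ℓ₁` isometrically: a functional `ψ` on `c₀` has `‖ψ‖ = ∑ⱼ |ψ eⱼ|`. Applied
to `φ ∘ u ∘ Qₙ`, where `Qₙ = c0tail 𝕜 n` kills the first `n` coordinates, this identifies the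
weak `ℓ₁`-norm of the tail `(u eₙ₊ⱼ)ⱼ` with `‖u Qₙ‖`, and shows that `(u eⱼ)ⱼ` is weakly
1-summable for every bounded `u`. So the claim is that `u` is compact iff `‖u Qₙ‖ → 0`. If
`‖u Qₙ‖ → 0`, then `u` is the norm limit of the finite-rank operators `u (1 - Qₙ)`. Conversely,
if `u` is compact and `‖xₙ‖ ≤ 1`, then `φ (u Qₙ xₙ) → 0` for every `φ`, so `0` is the only
cluster point of the relatively compact sequence `u Qₙ xₙ`.
-/

open scoped ZeroAtInfty

theorem RCLike.exists_norm_le_one_mul_eq_norm {𝕜 : Type*} [RCLike 𝕜] (c : 𝕜) :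
    ∃ σ : 𝕜, ‖σ‖ ≤ 1 ∧ σ * c = ‖c‖ := by
  rcases eq_or_ne c 0 with rfl | hc
  · exact ⟨1, by simp⟩
  · refine ⟨‖c‖ / c, ?_, by field_simp⟩
    rw [norm_div, RCLike.norm_ofReal, abs_norm, div_self (norm_ne_zero_iff.2 hc)]

section Operators

variable {𝕜 : Type*} [RCLike 𝕜] {X Y E : Type*} [SeminormedAddCommGroup X] [NormedSpace 𝕜 X]
  [NormedAddCommGroup Y] [NormedSpace 𝕜 Y] [NormedAddCommGroup E] [NormedSpace 𝕜 E]

theorem iSup_opENorm_comp_eq_opENorm (T : X →L[𝕜] E) :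
    ⨆ φ ∈ {φ : E →L[𝕜] 𝕜 | ‖φ‖ ≤ 1}, ‖φ ∘L T‖ₑ = ‖T‖ₑ := by
  refine le_antisymm (iSup₂_le fun φ hφ => ?_) (T.opENorm_le_bound fun x => ?_)
  · calc ‖φ ∘L T‖ₑ ≤ ‖φ‖ₑ * ‖T‖ₑ := φ.opENorm_comp_le T
      _ ≤ ‖T‖ₑ := mul_le_of_le_one_left' (by rw [← ofReal_norm]; exact ENNReal.ofReal_le_one.2 hφ)
  · obtain ⟨φ, hφ, hφx⟩ := exists_dual_vector'' 𝕜 (T x)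
    calc ‖T x‖ₑ = ‖φ (T x)‖ₑ := by rw [hφx]; simp [enorm_eq_nnnorm]
      _ ≤ ‖φ ∘L T‖ₑ * ‖x‖ₑ := (φ ∘L T).le_opENorm x
      _ ≤ _ := by
        gcongr
        exact le_iSup₂ (f := fun (ψ : E →L[𝕜] 𝕜) (_ : ‖ψ‖ ≤ 1) => ‖ψ ∘L T‖ₑ) φ hφ

theorem isCompactOperator_smulRight (φ : X →L[𝕜] 𝕜) (v : E) : IsCompactOperator (φ.smulRight v) :=
  (isCompactOperator_of_locallyCompactSpace_rng ((1 : 𝕜 →L[𝕜] 𝕜).smulRight v)).comp_clm φ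

theorem IsCompactOperator.tendsto_zero_of_forall_dual {ι : Type*} {l : Filter ι} {T : X →L[𝕜] E}
    (hT : IsCompactOperator T) {x : ι → X} (hx : ∀ i, ‖x i‖ ≤ 1)
    (hw : ∀ φ : E →L[𝕜] 𝕜, Tendsto (fun i => φ (T (x i))) l (𝓝 0)) :
    Tendsto (fun i => T (x i)) l (𝓝 0) := by
  refine (hT.isCompact_closure_image_closedBall 1).tendsto_nhds_of_unique_mapClusterPt
    (Eventually.of_forall fun i => subset_closure ⟨x i, mem_closedBall_zero_iff.2 (hx i), rfl⟩)
    fun w _ hw' => SeparatingDual.eq_zero_of_forall_dual_eq_zero (R := 𝕜) fun φ => ?_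
  have hφw : MapClusterPt (φ w) l (fun i => φ (T (x i))) :=
    hw'.continuousAt_comp φ.continuous.continuousAt
  exact eq_of_nhds_neBot (hφw.neBot.mono (inf_le_inf_left _ (hw φ)))

theorem IsCompactOperator.tendsto_comp_zero_of_forall_dual {T : X →L[𝕜] E}
    (hT : IsCompactOperator T) {S : ℕ → Y →L[𝕜] X} (hS : ∀ n, ‖S n‖ ≤ 1)
    (hw : ∀ φ : E →L[𝕜] 𝕜, Tendsto (fun n => φ ∘L T ∘L S n) atTop (𝓝 0)) :
    Tendsto (fun n => T ∘L S n) atTop (𝓝 0) := by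
  by_contra h
  obtain ⟨ε, hε, hfreq⟩ : ∃ ε > 0, ∃ᶠ n in atTop, ε ≤ ‖T ∘L S n‖ := by
    simpa [Metric.tendsto_nhds, dist_zero_right, frequently_atTop] using h
  obtain ⟨m, hm, hεm⟩ := extraction_of_frequently_atTop hfreq
  have hex (k : ℕ) : ∃ x : Y, ‖x‖ < 1 ∧ ε / 2 < ‖T (S (m k) x)‖ :=
    (T ∘L S (m k)).exists_lt_apply_of_lt_opNorm ((half_lt_self hε).trans_le (hεm k))
  choose x hx hTx using hex
  have hy (k : ℕ) : ‖S (m k) (x k)‖ ≤ 1 := by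
    simpa using (S (m k)).le_of_opNorm_le_of_le (hS _) (hx k).le
  have hTy := hT.tendsto_zero_of_forall_dual hy fun φ => by
    refine squeeze_zero_norm (fun k => ?_) (tendsto_norm_zero.comp ((hw φ).comp hm.tendsto_atTop))
    simpa using (φ ∘L T ∘L S (m k)).le_of_opNorm_le_of_le le_rfl (hx k).le
  obtain ⟨k, hk⟩ := ((tendsto_norm_zero.comp hTy).eventually (gt_mem_nhds (half_pos hε))).exists
  exact (hTx k).not_gt hk

end Operators

namespace ZeroAtInftyContinuousMap

variable {α β : Type*} [TopologicalSpace α] [NormedAddCommGroup β]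

theorem norm_apply_le (f : C₀(α, β)) (x : α) : ‖f x‖ ≤ ‖f‖ := by
  rw [← norm_toBCF_eq_norm]
  exact f.toBCF.norm_coe_le_norm x

theorem norm_le {f : C₀(α, β)} {C : ℝ} (hC : 0 ≤ C) : ‖f‖ ≤ C ↔ ∀ x, ‖f x‖ ≤ C := by
  rw [← norm_toBCF_eq_norm]
  exact BoundedContinuousFunction.norm_le hC

variable (𝕜 : Type*) [NormedField 𝕜] [NormedSpace 𝕜 β]

noncomputable def evalCLM (x : α) : C₀(α, β) →L[𝕜] β :=
  LinearMap.mkContinuous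
    { toFun := fun f => f x
      map_add' := fun _ _ => rfl
      map_smul' := fun _ _ => rfl } 1 fun f => by simpa using f.norm_apply_le x

@[simp]
theorem evalCLM_apply (x : α) (f : C₀(α, β)) : evalCLM 𝕜 x f = f x := rfl

end ZeroAtInftyContinuousMap

section c0

open ZeroAtInftyContinuousMap

variable {𝕜 : Type*} [RCLike 𝕜]

theorem c0single_apply (j i : ℕ) : c0single 𝕜 j i = if i = j then 1 else 0 := rfl

theorem sum_smul_c0single_apply (s : Finset ℕ) (b : ℕ → 𝕜) (i : ℕ) :
    (∑ j ∈ s, b j • c0single 𝕜 j) i = if i ∈ s then b i else 0 := by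
  rw [← evalCLM_apply 𝕜, map_sum]
  simp [c0single_apply]

theorem norm_sum_smul_c0single_le_one {s : Finset ℕ} {b : ℕ → 𝕜} (hb : ∀ j, ‖b j‖ ≤ 1) :
    ‖∑ j ∈ s, b j • c0single 𝕜 j‖ ≤ 1 :=
  (norm_le zero_le_one).2 fun i => by
    rw [sum_smul_c0single_apply]
    split_ifs
    exacts [hb i, by simp]

theorem hasSum_smul_c0single (y : C₀(ℕ, 𝕜)) : HasSum (fun j => y j • c0single 𝕜 j) y := by
  rw [HasSum, SummationFilter.unconditional_filter, Metric.tendsto_atTop]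
  intro ε hε
  have hy : Tendsto y atTop (𝓝 0) := by simpa [cocompact_eq_atTop] using y.zero_at_infty'
  obtain ⟨M, hM⟩ := Metric.tendsto_atTop.1 hy (ε / 2) (half_pos hε)
  refine ⟨Finset.range M, fun s hs => ?_⟩
  rw [dist_eq_norm]
  refine ((norm_le (half_pos hε).le).2 fun i => ?_).trans_lt (half_lt_self hε)
  rw [ZeroAtInftyContinuousMap.sub_apply, sum_smul_c0single_apply]
  split_ifs with hi
  · simpa using (half_pos hε).le
  · have hMi : M ≤ i := not_lt.1 fun h => hi (hs (Finset.mem_range.2 h))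
    simpa using (hM i hMi).le

theorem opENorm_eq_tsum_enorm_apply_c0single (ψ : C₀(ℕ, 𝕜) →L[𝕜] 𝕜) :
    ‖ψ‖ₑ = ∑' j, ‖ψ (c0single 𝕜 j)‖ₑ := by
  refine le_antisymm (ψ.opENorm_le_bound fun y => ?_)
    (ENNReal.summable.tsum_le_of_sum_le fun s => ?_)
  · calc ‖ψ y‖ₑ = ‖∑' j, ψ (y j • c0single 𝕜 j)‖ₑ := by
          rw [(ψ.hasSum (hasSum_smul_c0single y)).tsum_eq]
      _ ≤ ∑' j, ‖y j‖ₑ * ‖ψ (c0single 𝕜 j)‖ₑ := by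
          simpa only [map_smul, enorm_smul] using
            enorm_tsum_le_tsum_enorm (f := fun j => ψ (y j • c0single 𝕜 j))
      _ ≤ ∑' j, ‖y‖ₑ * ‖ψ (c0single 𝕜 j)‖ₑ := by
          gcongr with j
          simpa only [← ofReal_norm] using ENNReal.ofReal_le_ofReal (y.norm_apply_le j)
      _ = _ := by rw [ENNReal.tsum_mul_left, mul_comm]
  · choose σ hσ hσψ using fun j => RCLike.exists_norm_le_one_mul_eq_norm (ψ (c0single 𝕜 j))
    have hψ : ψ (∑ j ∈ s, σ j • c0single 𝕜 j) = ((∑ j ∈ s, ‖ψ (c0single 𝕜 j)‖ : ℝ) : 𝕜) := by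
      simp [map_sum, hσψ]
    have hsum : ∑ j ∈ s, ‖ψ (c0single 𝕜 j)‖ ≤ ‖ψ‖ := by
      have := ψ.le_of_opNorm_le_of_le le_rfl (norm_sum_smul_c0single_le_one (s := s) hσ)
      rwa [hψ, mul_one, RCLike.norm_ofReal, abs_of_nonneg (by positivity)] at this
    simpa only [← ofReal_norm, ENNReal.ofReal_sum_of_nonneg fun j _ => norm_nonneg _] using
      ENNReal.ofReal_le_ofReal hsum

theorem tsum_enorm_apply_c0single_ne_top (ψ : C₀(ℕ, 𝕜) →L[𝕜] 𝕜) :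
    ∑' j, ‖ψ (c0single 𝕜 j)‖ₑ ≠ ∞ :=
  opENorm_eq_tsum_enorm_apply_c0single ψ ▸ enorm_ne_top

variable (𝕜) in
noncomputable def c0truncate (n : ℕ) : C₀(ℕ, 𝕜) →L[𝕜] C₀(ℕ, 𝕜) :=
  ∑ j ∈ Finset.range n, (evalCLM 𝕜 j).smulRight (c0single 𝕜 j)

variable (𝕜) in
noncomputable def c0tail (n : ℕ) : C₀(ℕ, 𝕜) →L[𝕜] C₀(ℕ, 𝕜) :=
  ContinuousLinearMap.id 𝕜 _ - c0truncate 𝕜 n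

theorem isCompactOperator_c0truncate (n : ℕ) : IsCompactOperator (c0truncate 𝕜 n) :=
  Submodule.sum_mem (compactOperator (RingHom.id 𝕜) _ _) fun _ _ => isCompactOperator_smulRight _ _

theorem c0tail_apply_apply (n : ℕ) (y : C₀(ℕ, 𝕜)) (i : ℕ) :
    c0tail 𝕜 n y i = if i < n then 0 else y i := by
  have : c0truncate 𝕜 n y = ∑ j ∈ Finset.range n, y j • c0single 𝕜 j := by
    simp [c0truncate]
  simp only [c0tail, _root_.sub_apply, ContinuousLinearMap.id_apply, this,
    ZeroAtInftyContinuousMap.sub_apply, sum_smul_c0single_apply, Finset.mem_range]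
  split_ifs <;> simp

theorem norm_c0tail_le (n : ℕ) : ‖c0tail 𝕜 n‖ ≤ 1 :=
  ContinuousLinearMap.opNorm_le_bound _ zero_le_one fun y =>
    (norm_le (by positivity)).2 fun i => by
      rw [c0tail_apply_apply, one_mul]
      split_ifs
      exacts [by simp, y.norm_apply_le i]

theorem c0tail_c0single (n j : ℕ) :
    c0tail 𝕜 n (c0single 𝕜 j) = if j < n then 0 else c0single 𝕜 j := by
  ext i
  rw [c0tail_apply_apply, c0single_apply]
  split_ifs <;> simp_all [c0single_apply]
  omega

theorem opENorm_comp_c0tail (ψ : C₀(ℕ, 𝕜) →L[𝕜] 𝕜) (n : ℕ) :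
    ‖ψ ∘L c0tail 𝕜 n‖ₑ = ∑' k, ‖ψ (c0single 𝕜 (n + k))‖ₑ := by
  rw [opENorm_eq_tsum_enorm_apply_c0single]
  refine ((add_right_injective n).tsum_eq fun j hj => ?_).symm.trans (tsum_congr fun k => ?_)
  · have : ¬j < n := fun h => hj (by simp [c0tail_c0single, h])
    exact ⟨j - n, Nat.add_sub_of_le (not_lt.1 this)⟩
  · simp [c0tail_c0single]

end c0

theorem weakLpNorm_one (𝕜 : Type*) [RCLike 𝕜] {X : Type*} [NormedAddCommGroup X]
    [NormedSpace 𝕜 X] (x : ℕ → X) :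
    weakLpNorm 𝕜 1 x = ⨆ φ ∈ {φ : X →L[𝕜] 𝕜 | ‖φ‖ ≤ 1}, ∑' j, ‖φ (x j)‖ₑ := by
  simp [weakLpNorm, enorm_eq_nnnorm]

section OperatorOnC0

variable {𝕜 : Type*} [RCLike 𝕜] {E : Type*} [NormedAddCommGroup E] [NormedSpace 𝕜 E]
  (u : C₀(ℕ, 𝕜) →L[𝕜] E)

theorem weakLpNorm_one_c0single_add (n : ℕ) :
    weakLpNorm 𝕜 1 (fun j => u (c0single 𝕜 (n + j))) = ‖u ∘L c0tail 𝕜 n‖ₑ := by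
  rw [weakLpNorm_one, ← iSup_opENorm_comp_eq_opENorm]
  simp only [← ContinuousLinearMap.comp_assoc, opENorm_comp_c0tail,
    ContinuousLinearMap.comp_apply]

theorem weaklyLpSummable_one_c0single : WeaklyLpSummable 𝕜 1 fun j => u (c0single 𝕜 j) := by
  intro φ
  simp only [Real.rpow_one]
  refine ENNReal.tsum_coe_ne_top_iff_summable_coe (f := fun j => ‖φ (u (c0single 𝕜 j))‖₊) |>.1 ?_
  simpa [enorm_eq_nnnorm] using tsum_enorm_apply_c0single_ne_top (φ ∘L u)

theorem uncondLpSummable_one_c0single_iff :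
    UncondLpSummable 𝕜 1 (fun j => u (c0single 𝕜 j)) ↔
      Tendsto (fun n => u ∘L c0tail 𝕜 n) atTop (𝓝 0) := by
  simp only [UncondLpSummable, weakLpNorm_one_c0single_add, weaklyLpSummable_one_c0single,
    true_and, ← tendsto_zero_iff_enorm_tendsto_zero]

theorem isCompactOperator_iff_tendsto_comp_c0tail [CompleteSpace E] :
    IsCompactOperator u ↔ Tendsto (fun n => u ∘L c0tail 𝕜 n) atTop (𝓝 0) := by
  refine ⟨fun hu => hu.tendsto_comp_zero_of_forall_dual norm_c0tail_le fun φ => ?_, fun h => ?_⟩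
  · rw [tendsto_zero_iff_enorm_tendsto_zero]
    simp only [← ContinuousLinearMap.comp_assoc, opENorm_comp_c0tail]
    simpa only [add_comm] using
      ENNReal.tendsto_sum_nat_add _ (tsum_enorm_apply_c0single_ne_top (φ ∘L u))
  · have htrunc (n : ℕ) : u ∘L c0truncate 𝕜 n = u - u ∘L c0tail 𝕜 n := by
      rw [c0tail, ContinuousLinearMap.comp_sub, ContinuousLinearMap.comp_id]
      abel
    refine isCompactOperator_of_tendsto (l := atTop) (F := fun n => u ∘L c0truncate 𝕜 n) ?_
      (Eventually.of_forall fun n => (isCompactOperator_c0truncate n).clm_comp u)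
    rw [tendsto_iff_norm_sub_tendsto_zero]
    simpa [htrunc] using tendsto_zero_iff_norm_tendsto_zero.1 h

end OperatorOnC0

/-- A bounded operator `u : c₀ → E` is compact iff `(u(e_j))_j` is
unconditionally `1`-summable in `E`. -/
theorem stmt_8 {𝕜 : Type*} [RCLike 𝕜] {E : Type*} [NormedAddCommGroup E] [NormedSpace 𝕜 E]
    [CompleteSpace E] (u : ZeroAtInftyContinuousMap ℕ 𝕜 →L[𝕜] E) :
    IsCompactOperator ⇑u ↔ UncondLpSummable 𝕜 1 fun j => u (c0single 𝕜 j) :=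
  (isCompactOperator_iff_tendsto_comp_c0tail u).trans (uncondLpSummable_one_c0single_iff u).symm
end

section
/- Let E be a Banach space, 1 < p < ∞ and p* = p/(p−1). Let (x_i)_{i=1}^∞ be a mid p-summable sequence in E and let (a_j)_{j=1}^∞, with a_j = (α_{j,i})_{i=1}^∞ ∈ ℓ_{p*}, be a weakly p-summable sequence in ℓ_{p*}. Then for each j the series ∑_{i=1}^∞ α_{j,i} x_i converges in E, the sequence (∑_{i=1}^∞ α_{j,i} x_i)_{j=1}^∞ is mid p-summable, and ‖(∑_{i=1}^∞ α_{j,i} x_i)_{j=1}^∞‖_{mid,p} ≤ ‖(a_j)_{j=1}^∞‖_{w,p} · ‖(x_i)_{i=1}^∞‖_{mid,p}. -/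
/-!
For an admissible sequence `(φ_n)` of functionals, set `b_n = (φ_n(x_i))_i ∈ ℓ_p` and let `ψ_n` be
the functional `c ↦ ∑_i b_{n,i} c_i` on `ℓ_{p*}`; by Hölder `‖ψ_n‖ ≤ ‖b_n‖_p`, and
`φ_n(∑_i α_{j,i} x_i) = ψ_n(a_j)`. Hence
`∑_n ∑_j |φ_n(y_j)|^p ≤ ‖(a_j)‖_{w,p}^p ∑_n ‖b_n‖_p^p ≤ ‖(a_j)‖_{w,p}^p ‖(x_i)‖_{mid,p}^p`.
The series converge because Hölder bounds `‖∑_{i ∈ s} α_i x_i‖` by the `ℓ_{p*}` norm of `α` on `s`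
times the weak `p`-norm of `(x_i)`, which is at most its mid `p`-norm. The weak `p`-norm of a weakly
`p`-summable sequence is finite by the closed graph theorem applied to `φ ↦ (φ(a_j))_j`.
-/

open Filter Topology
open scoped ENNReal NNReal

/-- The mid `p`-"norm" of a sequence, valued in `ℝ≥0∞`: the supremum of
`(∑_n ∑_j |φ_n(x_j)|^p)^{1/p}` over all weakly `p`-summable sequences `(φ_n)` in the dual
with weak `p`-norm at most one.  A sequence is mid `p`-summable iff this is `< ⊤`. -/
noncomputable def midLpNorm (𝕜 : Type*) [RCLike 𝕜] {X : Type*} [NormedAddCommGroup X]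
    [NormedSpace 𝕜 X] (p : ℝ) (x : ℕ → X) : ℝ≥0∞ :=
  ⨆ φ ∈ {φ : ℕ → X →L[𝕜] 𝕜 | WeaklyLpSummable 𝕜 p φ ∧ weakLpNorm 𝕜 p φ ≤ 1},
    (∑' n, ∑' j, (‖φ n (x j)‖₊ : ℝ≥0∞) ^ p) ^ (1 / p)

theorem ofReal_tsum_norm_rpow {ι : Type*} {E : ι → Type*} [∀ i, SeminormedAddCommGroup (E i)]
    {p : ℝ} (hp : 0 ≤ p) {f : ∀ i, E i} (hf : Summable fun i => ‖f i‖ ^ p) :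
    ENNReal.ofReal (∑' i, ‖f i‖ ^ p) = ∑' i, (‖f i‖₊ : ℝ≥0∞) ^ p := by
  rw [ENNReal.ofReal_tsum_of_nonneg (fun _ => by positivity) hf]
  simp_rw [← ENNReal.ofReal_rpow_of_nonneg (norm_nonneg _) hp, ofReal_norm, enorm_eq_nnnorm]

theorem summable_norm_rpow_of_tsum_ne_top {ι F : Type*} [SeminormedAddCommGroup F] {p : ℝ}
    {f : ι → F} (hf : ∑' i, (‖f i‖₊ : ℝ≥0∞) ^ p ≠ ⊤) : Summable fun i => ‖f i‖ ^ p := by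
  simpa [← ENNReal.toReal_rpow] using ENNReal.summable_toReal hf

theorem lp.coe_nnnorm_rpow_eq_tsum {α : Type*} {E : α → Type*} [∀ i, NormedAddCommGroup (E i)]
    {P : ℝ≥0∞} [Fact (1 ≤ P)] (hP : 0 < P.toReal) (f : lp E P) :
    (‖f‖₊ : ℝ≥0∞) ^ P.toReal = ∑' i, (‖f i‖₊ : ℝ≥0∞) ^ P.toReal := by
  rw [← ofReal_tsum_norm_rpow hP.le ((lp.memℓp f).summable hP), ← lp.norm_rpow_eq_tsum hP,
    ← ENNReal.ofReal_rpow_of_nonneg (norm_nonneg _) hP.le, ofReal_norm, enorm_eq_nnnorm]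

theorem hasSum_comp_pi_single {ι M α : Type*} [DecidableEq ι] [Zero M] [AddCommMonoid α]
    [TopologicalSpace α] {g : M → α} (hg : g 0 = 0) (i : ι) (m : M) :
    HasSum (fun n => g ((Pi.single i m : ι → M) n)) (g m) := by
  rw [← Pi.single_op (fun _ => g) (fun _ => hg)]
  exact hasSum_pi_single i (g m)

section SequenceNorms

variable {𝕜 : Type*} [RCLike 𝕜] {X : Type*} [NormedAddCommGroup X] [NormedSpace 𝕜 X] {p : ℝ}

theorem tsum_rpow_le_weakLpNorm_rpow (hp : 0 < p) (x : ℕ → X) {φ : X →L[𝕜] 𝕜} (hφ : ‖φ‖ ≤ 1) :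
    ∑' j, (‖φ (x j)‖₊ : ℝ≥0∞) ^ p ≤ weakLpNorm 𝕜 p x ^ p := by
  rw [← ENNReal.rpow_inv_le_iff hp, ← one_div]
  exact le_iSup₂ (f := fun (φ : X →L[𝕜] 𝕜) _ => (∑' j, (‖φ (x j)‖₊ : ℝ≥0∞) ^ p) ^ (1 / p)) φ hφ

theorem tsum_rpow_le_nnnorm_rpow_mul_weakLpNorm_rpow (hp : 0 < p) (x : ℕ → X) (φ : X →L[𝕜] 𝕜) :
    ∑' j, (‖φ (x j)‖₊ : ℝ≥0∞) ^ p ≤ (‖φ‖₊ : ℝ≥0∞) ^ p * weakLpNorm 𝕜 p x ^ p := by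
  rcases eq_or_ne φ 0 with rfl | hφ
  · simp [ENNReal.zero_rpow_of_pos hp]
  set ψ := (‖φ‖⁻¹ : 𝕜) • φ
  have hψ : ‖ψ‖ ≤ 1 := (norm_smul_inv_norm hφ).le
  have hφψ : ∀ y, ‖φ y‖₊ = ‖φ‖₊ * ‖ψ y‖₊ := fun y => NNReal.eq <| by
    rw [NNReal.coe_mul, coe_nnnorm, coe_nnnorm, coe_nnnorm, smul_apply, norm_smul, norm_inv,
      RCLike.norm_coe_norm, mul_inv_cancel_left₀ (norm_ne_zero_iff.2 hφ)]
  simp_rw [hφψ, ENNReal.coe_mul, ENNReal.mul_rpow_of_nonneg _ _ hp.le, ENNReal.tsum_mul_left]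
  gcongr
  exact tsum_rpow_le_weakLpNorm_rpow hp x hψ

theorem WeaklyLpSummable.of_weakLpNorm_ne_top (hp : 0 < p) {x : ℕ → X}
    (hx : weakLpNorm 𝕜 p x ≠ ⊤) : WeaklyLpSummable 𝕜 p x := fun φ =>
  summable_norm_rpow_of_tsum_ne_top <| ne_top_of_le_ne_top
    (ENNReal.mul_ne_top (by simp [ENNReal.rpow_eq_top_iff, hp.le])
      (ENNReal.rpow_ne_top_of_nonneg hp.le hx))
    (tsum_rpow_le_nnnorm_rpow_mul_weakLpNorm_rpow hp x φ)

theorem tsum_tsum_rpow_le_midLpNorm_rpow (hp : 0 < p) (x : ℕ → X) {Φ : ℕ → X →L[𝕜] 𝕜}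
    (hΦ : WeaklyLpSummable 𝕜 p Φ) (hΦ₁ : weakLpNorm 𝕜 p Φ ≤ 1) :
    ∑' n, ∑' j, (‖Φ n (x j)‖₊ : ℝ≥0∞) ^ p ≤ midLpNorm 𝕜 p x ^ p := by
  rw [← ENNReal.rpow_inv_le_iff hp, ← one_div]
  exact le_iSup₂ (f := fun (Φ : ℕ → X →L[𝕜] 𝕜) _ =>
    (∑' n, ∑' j, (‖Φ n (x j)‖₊ : ℝ≥0∞) ^ p) ^ (1 / p)) Φ ⟨hΦ, hΦ₁⟩

theorem weakLpNorm_le_midLpNorm (hp : 0 < p) (x : ℕ → X) :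
    weakLpNorm 𝕜 p x ≤ midLpNorm 𝕜 p x := by
  refine iSup₂_le fun φ hφ => ?_
  have hsingle : WeaklyLpSummable 𝕜 p (Pi.single 0 φ : ℕ → X →L[𝕜] 𝕜) := fun ψ =>
    (hasSum_comp_pi_single (g := fun f => ‖ψ f‖ ^ p) (by simp [hp.ne']) 0 φ).summable
  have hsingle₁ : weakLpNorm 𝕜 p (Pi.single 0 φ : ℕ → X →L[𝕜] 𝕜) ≤ 1 := by
    refine iSup₂_le fun ψ hψ => ?_
    rw [(hasSum_comp_pi_single (g := fun f => (‖ψ f‖₊ : ℝ≥0∞) ^ p) (by simp [hp]) 0 φ).tsum_eq,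
      one_div, ENNReal.rpow_rpow_inv hp.ne', ENNReal.coe_le_one_iff, ← NNReal.coe_le_one,
      coe_nnnorm]
    simpa using ψ.le_of_opNorm_le_of_le hψ hφ
  refine le_iSup₂_of_le (f := fun (Φ : ℕ → X →L[𝕜] 𝕜) _ =>
    (∑' n, ∑' j, (‖Φ n (x j)‖₊ : ℝ≥0∞) ^ p) ^ (1 / p)) _ ⟨hsingle, hsingle₁⟩ ?_
  rw [(hasSum_comp_pi_single (g := fun f => ∑' j, (‖f (x j)‖₊ : ℝ≥0∞) ^ p) (by simp [hp]) 0
    φ).tsum_eq]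

end SequenceNorms

section CoefficientOperator

variable {𝕜 : Type*} [RCLike 𝕜] {X : Type*} [NormedAddCommGroup X] [NormedSpace 𝕜 X] {p : ℝ}
  [Fact (1 ≤ ENNReal.ofReal p)] {x : ℕ → X}

theorem WeaklyLpSummable.memℓp (hx : WeaklyLpSummable 𝕜 p x) (φ : X →L[𝕜] 𝕜) :
    Memℓp (fun j => φ (x j)) (ENNReal.ofReal p) := by
  have hp : 1 ≤ p := ENNReal.one_le_ofReal.1 Fact.out
  exact memℓp_gen (by simpa [ENNReal.toReal_ofReal (zero_le_one.trans hp)] using hx φ)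

noncomputable def WeaklyLpSummable.coeffCLM (hx : WeaklyLpSummable 𝕜 p x) :
    (X →L[𝕜] 𝕜) →L[𝕜] lp (fun _ : ℕ => 𝕜) (ENNReal.ofReal p) :=
  ContinuousLinearMap.ofSeqClosedGraph
    (g := { toFun := fun φ => ⟨fun j => φ (x j), hx.memℓp φ⟩
            map_add' := fun _ _ => rfl
            map_smul' := fun _ _ => rfl })
    fun _ φ g hu hug => lp.ext <| funext fun j =>
      tendsto_nhds_unique (((lp.evalCLM 𝕜 _ _ j).continuous.tendsto g).comp hug)
        (((continuous_eval_const (x j)).tendsto φ).comp hu)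

theorem WeaklyLpSummable.coeffCLM_apply (hx : WeaklyLpSummable 𝕜 p x) (φ : X →L[𝕜] 𝕜) (j : ℕ) :
    hx.coeffCLM φ j = φ (x j) :=
  rfl

theorem WeaklyLpSummable.coe_nnnorm_coeffCLM_rpow (hx : WeaklyLpSummable 𝕜 p x)
    (φ : X →L[𝕜] 𝕜) : (‖hx.coeffCLM φ‖₊ : ℝ≥0∞) ^ p = ∑' j, (‖φ (x j)‖₊ : ℝ≥0∞) ^ p := by
  have hp : 0 < p := zero_lt_one.trans_le (ENNReal.one_le_ofReal.1 Fact.out)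
  have h := lp.coe_nnnorm_rpow_eq_tsum (by rwa [ENNReal.toReal_ofReal hp.le]) (hx.coeffCLM φ)
  rwa [ENNReal.toReal_ofReal hp.le] at h

theorem WeaklyLpSummable.weakLpNorm_le_nnnorm_coeffCLM (hx : WeaklyLpSummable 𝕜 p x) :
    weakLpNorm 𝕜 p x ≤ ‖hx.coeffCLM‖₊ := by
  have hp : 0 < p := zero_lt_one.trans_le (ENNReal.one_le_ofReal.1 Fact.out)
  refine iSup₂_le fun φ hφ => ?_
  rw [← hx.coe_nnnorm_coeffCLM_rpow, one_div, ENNReal.rpow_rpow_inv hp.ne', ENNReal.coe_le_coe]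
  exact hx.coeffCLM.le_opNNNorm φ |>.trans (mul_le_of_le_one_right' hφ)

end CoefficientOperator

theorem WeaklyLpSummable.weakLpNorm_lt_top {𝕜 : Type*} [RCLike 𝕜] {X : Type*}
    [NormedAddCommGroup X] [NormedSpace 𝕜 X] {p : ℝ} (hp : 1 ≤ p) {x : ℕ → X}
    (hx : WeaklyLpSummable 𝕜 p x) : weakLpNorm 𝕜 p x < ⊤ :=
  have : Fact (1 ≤ ENNReal.ofReal p) := ⟨ENNReal.one_le_ofReal.2 hp⟩
  hx.weakLpNorm_le_nnnorm_coeffCLM.trans_lt ENNReal.coe_lt_top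

section Series

variable {𝕜 : Type*} [RCLike 𝕜] {X : Type*} [NormedAddCommGroup X] [NormedSpace 𝕜 X]
  {p q : ℝ} {x : ℕ → X}

theorem tsum_norm_rpow_le_weakLpNorm_toReal_rpow (hp : 0 < p) (hx : weakLpNorm 𝕜 p x ≠ ⊤)
    {φ : X →L[𝕜] 𝕜} (hφ : ‖φ‖ ≤ 1) :
    ∑' i, ‖φ (x i)‖ ^ p ≤ (weakLpNorm 𝕜 p x).toReal ^ p := by
  rw [ENNReal.toReal_rpow, ← ENNReal.ofReal_le_iff_le_toReal
      (ENNReal.rpow_ne_top_of_nonneg hp.le hx),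
    ofReal_tsum_norm_rpow hp.le (WeaklyLpSummable.of_weakLpNorm_ne_top hp hx φ)]
  exact tsum_rpow_le_weakLpNorm_rpow hp x hφ

theorem norm_sum_smul_le_weakLpNorm (hpq : p.HolderConjugate q) (hx : weakLpNorm 𝕜 p x ≠ ⊤)
    (t : ℕ → 𝕜) (s : Finset ℕ) :
    ‖∑ i ∈ s, t i • x i‖ ≤ (∑ i ∈ s, ‖t i‖ ^ q) ^ (1 / q) * (weakLpNorm 𝕜 p x).toReal := by
  obtain ⟨φ, hφ, hφv⟩ := exists_dual_vector'' 𝕜 (∑ i ∈ s, t i • x i)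
  have hφx : ∑ i ∈ s, ‖φ (x i)‖ ^ p ≤ (weakLpNorm 𝕜 p x).toReal ^ p :=
    (Summable.sum_le_tsum s (fun _ _ => by positivity)
      (WeaklyLpSummable.of_weakLpNorm_ne_top hpq.pos hx φ)).trans
      (tsum_norm_rpow_le_weakLpNorm_toReal_rpow hpq.pos hx hφ)
  calc ‖∑ i ∈ s, t i • x i‖ = ‖φ (∑ i ∈ s, t i • x i)‖ := by simp [hφv]
    _ ≤ ∑ i ∈ s, ‖t i‖ * ‖φ (x i)‖ := by
      simpa only [map_sum, map_smul, smul_eq_mul, norm_mul] using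
        norm_sum_le s fun i => t i * φ (x i)
    _ ≤ (∑ i ∈ s, ‖t i‖ ^ q) ^ (1 / q) * (∑ i ∈ s, ‖φ (x i)‖ ^ p) ^ (1 / p) :=
      Real.inner_le_Lp_mul_Lq_of_nonneg s hpq.symm (fun _ _ => norm_nonneg _)
        (fun _ _ => norm_nonneg _)
    _ ≤ (∑ i ∈ s, ‖t i‖ ^ q) ^ (1 / q) * (weakLpNorm 𝕜 p x).toReal := by
      gcongr
      rw [one_div, Real.rpow_inv_le_iff_of_pos (by positivity) ENNReal.toReal_nonneg hpq.pos]
      exact hφx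

theorem summable_smul_of_weakLpNorm_ne_top [CompleteSpace X] (hpq : p.HolderConjugate q)
    (hx : weakLpNorm 𝕜 p x ≠ ⊤) {t : ℕ → 𝕜} (ht : Summable fun i => ‖t i‖ ^ q) :
    Summable fun i => t i • x i := by
  set W := (weakLpNorm 𝕜 p x).toReal
  have hW : 0 ≤ W := ENNReal.toReal_nonneg
  refine summable_iff_vanishing_norm.2 fun ε hε => ?_
  obtain ⟨s, hs⟩ := summable_iff_vanishing_norm.1 ht ((ε / (W + 1)) ^ q) (by positivity)
  refine ⟨s, fun u hu => (norm_sum_smul_le_weakLpNorm hpq hx t u).trans_lt ?_⟩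
  have htail : (∑ i ∈ u, ‖t i‖ ^ q) ^ (1 / q) < ε / (W + 1) := by
    have h := hs u hu
    rw [Real.norm_of_nonneg (by positivity)] at h
    rw [one_div, Real.rpow_inv_lt_iff_of_pos (by positivity) (by positivity) hpq.symm.pos]
    exact h
  calc (∑ i ∈ u, ‖t i‖ ^ q) ^ (1 / q) * W ≤ ε / (W + 1) * W := by gcongr
    _ < ε := by rw [div_mul_eq_mul_div, div_lt_iff₀ (by positivity)]; nlinarith

end Series

section Pairing

variable {𝕜 : Type*} [RCLike 𝕜] {ι : Type*} (P Q : ℝ≥0∞) [Fact (1 ≤ P)] [Fact (1 ≤ Q)]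
  [P.HolderConjugate Q]

noncomputable def lp.mulPairing : lp (fun _ : ι => 𝕜) P →L[𝕜] lp (fun _ : ι => 𝕜) Q →L[𝕜] 𝕜 :=
  lp.dualPairing P Q (fun _ => ContinuousLinearMap.mul 𝕜 𝕜) (K := 1) fun _ =>
    (ContinuousLinearMap.opNorm_mul_le 𝕜 𝕜).trans_eq NNReal.coe_one.symm

theorem lp.mulPairing_apply (b : lp (fun _ : ι => 𝕜) P) (c : lp (fun _ : ι => 𝕜) Q) :
    lp.mulPairing P Q b c = ∑' i, b i * c i :=
  rfl

theorem lp.nnnorm_mulPairing_apply_le (b : lp (fun _ : ι => 𝕜) P) :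
    ‖lp.mulPairing P Q b‖₊ ≤ ‖b‖₊ := by
  refine (ContinuousLinearMap.le_opNNNorm _ b).trans (mul_le_of_le_one_left' ?_)
  exact (lp.norm_dualPairing _ _).trans_eq NNReal.coe_one

end Pairing

theorem midLpNorm_tsum_smul_le {𝕜 : Type*} [RCLike 𝕜] {X : Type*} [NormedAddCommGroup X]
    [NormedSpace 𝕜 X] {p q : ℝ} (hpq : p.HolderConjugate q) [Fact (1 ≤ ENNReal.ofReal q)]
    {x : ℕ → X} (hx : WeaklyLpSummable 𝕜 p x) (a : ℕ → lp (fun _ : ℕ => 𝕜) (ENNReal.ofReal q))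
    (hxa : ∀ j, Summable fun i => a j i • x i) :
    midLpNorm 𝕜 p (fun j => ∑' i, a j i • x i) ≤ weakLpNorm 𝕜 p a * midLpNorm 𝕜 p x := by
  have hp := hpq.pos
  have : Fact (1 ≤ ENNReal.ofReal p) := ⟨ENNReal.one_le_ofReal.2 hpq.lt.le⟩
  have := hpq.ennrealOfReal
  refine iSup₂_le fun Φ ⟨hΦ, hΦ₁⟩ => ?_
  set ψ : ℕ → lp (fun _ : ℕ => 𝕜) (ENNReal.ofReal q) →L[𝕜] 𝕜 := fun n =>
    lp.mulPairing _ _ (hx.coeffCLM (Φ n))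
  have hΦψ : ∀ n j, Φ n (∑' i, a j i • x i) = ψ n (a j) := fun n j => by
    rw [(Φ n).map_tsum (hxa j), lp.mulPairing_apply]
    exact tsum_congr fun i => by simp [hx.coeffCLM_apply, mul_comm]
  have hψ : ∀ n, (‖ψ n‖₊ : ℝ≥0∞) ^ p ≤ ∑' i, (‖Φ n (x i)‖₊ : ℝ≥0∞) ^ p := fun n => by
    rw [← hx.coe_nnnorm_coeffCLM_rpow]
    gcongr
    exact lp.nnnorm_mulPairing_apply_le _ _ _
  rw [one_div, ENNReal.rpow_inv_le_iff hp]
  calc ∑' n, ∑' j, (‖Φ n (∑' i, a j i • x i)‖₊ : ℝ≥0∞) ^ p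
      = ∑' n, ∑' j, (‖ψ n (a j)‖₊ : ℝ≥0∞) ^ p := by simp_rw [hΦψ]
    _ ≤ ∑' n, (‖ψ n‖₊ : ℝ≥0∞) ^ p * weakLpNorm 𝕜 p a ^ p :=
      ENNReal.tsum_le_tsum fun n => tsum_rpow_le_nnnorm_rpow_mul_weakLpNorm_rpow hp a (ψ n)
    _ ≤ (∑' n, ∑' i, (‖Φ n (x i)‖₊ : ℝ≥0∞) ^ p) * weakLpNorm 𝕜 p a ^ p := by
      rw [ENNReal.tsum_mul_right]
      gcongr with n
      exact hψ n
    _ ≤ midLpNorm 𝕜 p x ^ p * weakLpNorm 𝕜 p a ^ p := by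
      gcongr
      exact tsum_tsum_rpow_le_midLpNorm_rpow hp x hΦ hΦ₁
    _ = (weakLpNorm 𝕜 p a * midLpNorm 𝕜 p x) ^ p := by
      rw [ENNReal.mul_rpow_of_nonneg _ _ hp.le, mul_comm]

/-- If `(x_i)` is mid `p`-summable in `E` and `(a_j)` is a weakly
`p`-summable sequence in `ℓ_{p*}` (`1 < p < ∞`, `p* = p/(p-1)`), then each series
`∑_i a_{j,i} x_i` converges, the resulting sequence is mid `p`-summable, and its mid
`p`-norm is at most `‖(a_j)‖_{w,p} ⬝ ‖(x_i)‖_{mid,p}`. -/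
theorem stmt_11 {𝕜 : Type*} [RCLike 𝕜] {E : Type*} [NormedAddCommGroup E] [NormedSpace 𝕜 E]
    [CompleteSpace E] {p : ℝ} (hp : 1 < p) [Fact (1 ≤ ENNReal.ofReal (p / (p - 1)))]
    (x : ℕ → E) (hx : midLpNorm 𝕜 p x < ⊤)
    (a : ℕ → lp (fun _ : ℕ => 𝕜) (ENNReal.ofReal (p / (p - 1)))) (ha : WeaklyLpSummable 𝕜 p a) :
    ∃ y : ℕ → E,
      (∀ j, Tendsto (fun m => ∑ i ∈ Finset.range m, a j i • x i) atTop (𝓝 (y j))) ∧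
      midLpNorm 𝕜 p y < ⊤ ∧
      midLpNorm 𝕜 p y ≤ weakLpNorm 𝕜 p a * midLpNorm 𝕜 p x := by
  have hpq : p.HolderConjugate (p / (p - 1)) := .conjExponent hp
  have hxw : weakLpNorm 𝕜 p x ≠ ⊤ := ne_top_of_le_ne_top hx.ne (weakLpNorm_le_midLpNorm hpq.pos x)
  have hq : (ENNReal.ofReal (p / (p - 1))).toReal = p / (p - 1) :=
    ENNReal.toReal_ofReal hpq.symm.nonneg
  have hxa : ∀ j, Summable fun i => a j i • x i := fun j => by
    refine summable_smul_of_weakLpNorm_ne_top hpq hxw ?_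
    have h := (lp.memℓp (a j)).summable (by rw [hq]; exact hpq.symm.pos)
    rwa [hq] at h
  have hy := midLpNorm_tsum_smul_le hpq (.of_weakLpNorm_ne_top hpq.pos hxw) a hxa
  exact ⟨_, fun j => (hxa j).hasSum.tendsto_sum_nat, hy.trans_lt
    (ENNReal.mul_lt_top (ha.weakLpNorm_lt_top hp.le) hx), hy⟩
end
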